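/- For every real s ≥ 1/2 there exists a constant C > 0 with the following property: for every function N₁ : ℤ³ → [0,∞) satisfying N₁(k₁,k₂,k₃) ≤ ⟨k₁⟩ · ( 𝟙[k₁+k₂=0] + 𝟙[k₁+k₃=0] ) for all integers k₁, k₂, k₃, and for all functions v₁, v₂, v₃ : ℤ → [0,∞): ( Σ_{k∈ℤ} ⟨k⟩^{2s} · ( Σ_{k₁+k₂+k₃ = k} N₁(k₁,k₂,k₃) · v₁(k₁)·v₂(k₂)·v₃(k₃) )² )^{1/2} ≤ C · Π_{l=1}^3 ( Σ_{k∈ℤ} ⟨k⟩^{2s} v_l(k)² )^{1/2}, where the inner sum ranges over all triples (k₁,k₂,k₃) ∈ ℤ³ with k₁+k₂+k₃ = k and all sums are interpreted in [0,∞]. -/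

import Mathlib

open scoped ENNReal NNReal BigOperators

/-- The Japanese bracket `⟨k⟩ = (1+k²)^{1/2}`, as an extended nonnegative real. -/
noncomputable def J (k : ℤ) : ℝ≥0∞ := ENNReal.ofReal (Real.sqrt (1 + (k : ℝ) ^ 2))

/-!
On the resonant set `k₁ + k₂ = 0` the output frequency is `k₃`, so the trilinear term at `k`
collapses to `(Σₐ ⟨a⟩ v₁(a) v₂(-a)) · v₃(k)`, and symmetrically on `k₁ + k₃ = 0`. Since
`⟨a⟩ ≤ ⟨a⟩^{2s}` for `s ≥ 1/2`, Cauchy–Schwarz bounds the pairing by `‖v₁‖_{Hˢ} ‖v₂‖_{Hˢ}`, and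
Minkowski's inequality in the weighted `ℓ²` norm gives the estimate with `C = 2`.
-/

open MeasureTheory Function Set

theorem ENNReal.tsum_mul_le_tsum_sq_mul_tsum_sq {α : Type*} (f g : α → ℝ≥0∞) :
    ∑' a, f a * g a ≤
      (∑' a, f a ^ (2:ℝ)) ^ ((1:ℝ)/2) * (∑' a, g a ^ (2:ℝ)) ^ ((1:ℝ)/2) := by
  let _ : MeasurableSpace α := ⊤
  simpa [lintegral_count] using ENNReal.lintegral_mul_le_Lp_mul_Lq Measure.count
    Real.HolderConjugate.two_two (measurable_from_top (f := f)).aemeasurable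
    (measurable_from_top (f := g)).aemeasurable

theorem ENNReal.tsum_sq_add_le {α : Type*} (f g : α → ℝ≥0∞) :
    (∑' a, (f a + g a) ^ (2:ℝ)) ^ ((1:ℝ)/2) ≤
      (∑' a, f a ^ (2:ℝ)) ^ ((1:ℝ)/2) + (∑' a, g a ^ (2:ℝ)) ^ ((1:ℝ)/2) := by
  let _ : MeasurableSpace α := ⊤
  simpa [lintegral_count] using ENNReal.lintegral_Lp_add_le (μ := Measure.count)
    (measurable_from_top (f := f)).aemeasurable (measurable_from_top (f := g)).aemeasurable
    one_le_two

theorem ENNReal.rpow_mul_sq (x y : ℝ≥0∞) (s : ℝ) :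
    (x ^ s * y) ^ (2 : ℝ) = x ^ (2 * s) * y ^ (2 : ℕ) := by
  rw [ENNReal.mul_rpow_of_nonneg _ _ zero_le_two, ← ENNReal.rpow_mul, mul_comm s,
    ← ENNReal.rpow_natCast, Nat.cast_ofNat]

theorem ite_one_mul_le_indicator {β : Type*} (P : Prop) [Decidable P] {S : Set β} {b : β}
    (h : P → b ∈ S) (G : β → ℝ≥0∞) : (if P then 1 else 0) * G b ≤ S.indicator G b := by
  split_ifs with hP
  · rw [one_mul, indicator_of_mem (h hP)]
  · rw [zero_mul]; exact zero_le

theorem one_le_J (k : ℤ) : 1 ≤ J k := by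
  rw [J, ← ENNReal.ofReal_one, ENNReal.ofReal_le_ofReal_iff (Real.sqrt_nonneg _),
    Real.one_le_sqrt]
  exact le_add_of_nonneg_right (sq_nonneg _)

theorem J_neg (k : ℤ) : J (-k) = J k := by simp [J]

theorem J_le_rpow_mul_rpow {s : ℝ} (hs : 1 / 2 ≤ s) (k : ℤ) : J k ≤ J k ^ s * J k ^ s := by
  rw [← ENNReal.rpow_add_of_nonneg _ _ (by linarith) (by linarith)]
  simpa using ENNReal.rpow_le_rpow_of_exponent_le (one_le_J k) (by linarith : (1 : ℝ) ≤ s + s)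

noncomputable def sobolevNorm (s : ℝ) (w : ℤ → ℝ≥0∞) : ℝ≥0∞ :=
  (∑' k, J k ^ (2 * s) * w k ^ (2 : ℕ)) ^ ((1 : ℝ) / 2)

theorem sobolevNorm_eq (s : ℝ) (w : ℤ → ℝ≥0∞) :
    sobolevNorm s w = (∑' k, (J k ^ s * w k) ^ (2 : ℝ)) ^ ((1 : ℝ) / 2) := by
  simp only [sobolevNorm, ENNReal.rpow_mul_sq]

theorem sobolevNorm_mono {s : ℝ} {w w' : ℤ → ℝ≥0∞} (h : ∀ k, w k ≤ w' k) :
    sobolevNorm s w ≤ sobolevNorm s w' := by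
  unfold sobolevNorm
  gcongr with k
  exact h k

theorem sobolevNorm_add_le (s : ℝ) (w w' : ℤ → ℝ≥0∞) :
    sobolevNorm s (fun k => w k + w' k) ≤ sobolevNorm s w + sobolevNorm s w' := by
  simpa only [sobolevNorm_eq, mul_add] using
    ENNReal.tsum_sq_add_le (fun k => J k ^ s * w k) (fun k => J k ^ s * w' k)

theorem sobolevNorm_const_mul (s : ℝ) (c : ℝ≥0∞) (w : ℤ → ℝ≥0∞) :
    sobolevNorm s (fun k => c * w k) = c * sobolevNorm s w := by
  simp only [sobolevNorm, mul_pow, mul_left_comm _ (c ^ 2), ENNReal.tsum_mul_left]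
  rw [ENNReal.mul_rpow_of_nonneg _ _ (by norm_num), ← ENNReal.rpow_natCast, ← ENNReal.rpow_mul]
  norm_num

theorem sobolevNorm_comp_neg (s : ℝ) (w : ℤ → ℝ≥0∞) :
    sobolevNorm s (fun k => w (-k)) = sobolevNorm s w := by
  unfold sobolevNorm
  rw [← (Equiv.neg ℤ).tsum_eq]
  simp [J_neg]

theorem tsum_J_mul_mul_comp_neg_le {s : ℝ} (hs : 1 / 2 ≤ s) (f g : ℤ → ℝ≥0∞) :
    ∑' a, J a * f a * g (-a) ≤ sobolevNorm s f * sobolevNorm s g := by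
  calc ∑' a, J a * f a * g (-a) ≤ ∑' a, (J a ^ s * f a) * (J a ^ s * g (-a)) :=
        ENNReal.tsum_le_tsum fun a => by
          grw [J_le_rpow_mul_rpow hs a]
          exact le_of_eq (by ring)
    _ ≤ sobolevNorm s f * sobolevNorm s (fun k => g (-k)) := by
        simpa only [sobolevNorm_eq] using ENNReal.tsum_mul_le_tsum_sq_mul_tsum_sq _ _
    _ = sobolevNorm s f * sobolevNorm s g := by rw [sobolevNorm_comp_neg]

noncomputable def trilinearConv (N : ℤ → ℤ → ℤ → ℝ≥0∞) (w₁ w₂ w₃ : ℤ → ℝ≥0∞) (k : ℤ) : ℝ≥0∞ :=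
  ∑' q : ℤ × ℤ × ℤ, if q.1 + q.2.1 + q.2.2 = k then
    N q.1 q.2.1 q.2.2 * w₁ q.1 * w₂ q.2.1 * w₃ q.2.2 else 0

theorem trilinearConv_le_of_resonant {N : ℤ → ℤ → ℤ → ℝ≥0∞}
    (hN : ∀ k₁ k₂ k₃ : ℤ, N k₁ k₂ k₃ ≤
      J k₁ * ((if k₁ + k₂ = 0 then 1 else 0) + (if k₁ + k₃ = 0 then 1 else 0)))
    (w₁ w₂ w₃ : ℤ → ℝ≥0∞) (k : ℤ) :
    trilinearConv N w₁ w₂ w₃ k ≤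
      (∑' a, J a * w₁ a * w₂ (-a)) * w₃ k + (∑' a, J a * w₁ a * w₃ (-a)) * w₂ k := by
  set G : ℤ × ℤ × ℤ → ℝ≥0∞ := fun q => J q.1 * w₁ q.1 * w₂ q.2.1 * w₃ q.2.2
  set S₂ := range fun a : ℤ => (a, -a, k)
  set S₃ := range fun a : ℤ => (a, k, -a)
  have hinj₂ : Injective fun a : ℤ => (a, -a, k) := fun a b h => congrArg Prod.fst h
  have hinj₃ : Injective fun a : ℤ => (a, k, -a) := fun a b h => congrArg Prod.fst h
  have hpt : ∀ q : ℤ × ℤ × ℤ,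
      (if q.1 + q.2.1 + q.2.2 = k then N q.1 q.2.1 q.2.2 * w₁ q.1 * w₂ q.2.1 * w₃ q.2.2 else 0)
        ≤ S₂.indicator G q + S₃.indicator G q := by
    rintro ⟨a, b, c⟩
    dsimp only
    -- On `a + b = 0` the constraint `a + b + c = k` forces `(a, b, c) = (a, -a, k) ∈ S₂`;
    -- symmetrically on `a + c = 0`.
    split_ifs with hk
    · calc N a b c * w₁ a * w₂ b * w₃ c
          ≤ J a * ((if a + b = 0 then 1 else 0) + (if a + c = 0 then 1 else 0))
              * w₁ a * w₂ b * w₃ c := by gcongr; exact hN a b c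
        _ = (if a + b = 0 then 1 else 0) * G (a, b, c)
              + (if a + c = 0 then 1 else 0) * G (a, b, c) := by simp only [G]; ring
        _ ≤ S₂.indicator G (a, b, c) + S₃.indicator G (a, b, c) := by
          gcongr <;> apply ite_one_mul_le_indicator <;> intro h <;> exact ⟨a, by
            simp only [Prod.mk.injEq, true_and]; omega⟩
    · exact zero_le
  calc trilinearConv N w₁ w₂ w₃ k
      ≤ ∑' q, (S₂.indicator G q + S₃.indicator G q) := ENNReal.tsum_le_tsum hpt
    _ = ∑' a, G (a, -a, k) + ∑' a, G (a, k, -a) := by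
      rw [ENNReal.tsum_add, ← tsum_subtype, ← tsum_subtype, tsum_range G hinj₂,
        tsum_range G hinj₃]
    _ = _ := by
      simp only [G, ← ENNReal.tsum_mul_right]
      congr 1
      exact tsum_congr fun a => by ring

/-- Trilinear estimate for resonant multipliers supported on `{k₁+k₂=0} ∪ {k₁+k₃=0}`
with one derivative loss in `k₁`, for `s ≥ 1/2`. -/
theorem trilinear_resonant_estimate (s : ℝ) (hs : 1 / 2 ≤ s) :
    ∃ C : ℝ, 0 < C ∧ ∀ N₁ : ℤ → ℤ → ℤ → ℝ≥0∞,
      (∀ k₁ k₂ k₃ : ℤ, N₁ k₁ k₂ k₃ ≤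
        J k₁ * ((if k₁ + k₂ = 0 then 1 else 0) + (if k₁ + k₃ = 0 then 1 else 0))) →
      ∀ v₁ v₂ v₃ : ℤ → ℝ≥0,
      (∑' k : ℤ, J k ^ (2 * s) *
          (∑' q : ℤ × ℤ × ℤ, if q.1 + q.2.1 + q.2.2 = k then
              N₁ q.1 q.2.1 q.2.2 * (v₁ q.1 : ℝ≥0∞) * (v₂ q.2.1 : ℝ≥0∞) * (v₃ q.2.2 : ℝ≥0∞)
            else 0) ^ (2 : ℕ)) ^ ((1 : ℝ) / 2)
      ≤ ENNReal.ofReal C *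
          ((∑' k : ℤ, J k ^ (2 * s) * (v₁ k : ℝ≥0∞) ^ (2 : ℕ)) ^ ((1 : ℝ) / 2) *
            (∑' k : ℤ, J k ^ (2 * s) * (v₂ k : ℝ≥0∞) ^ (2 : ℕ)) ^ ((1 : ℝ) / 2) *
            (∑' k : ℤ, J k ^ (2 * s) * (v₃ k : ℝ≥0∞) ^ (2 : ℕ)) ^ ((1 : ℝ) / 2)) := by
  refine ⟨2, two_pos, fun N₁ hN v₁ v₂ v₃ => ?_⟩
  set w₁ : ℤ → ℝ≥0∞ := fun k => v₁ k
  set w₂ : ℤ → ℝ≥0∞ := fun k => v₂ k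
  set w₃ : ℤ → ℝ≥0∞ := fun k => v₃ k
  change sobolevNorm s (trilinearConv N₁ w₁ w₂ w₃) ≤
    ENNReal.ofReal 2 * (sobolevNorm s w₁ * sobolevNorm s w₂ * sobolevNorm s w₃)
  calc sobolevNorm s (trilinearConv N₁ w₁ w₂ w₃)
      ≤ sobolevNorm s fun k =>
          (∑' a, J a * w₁ a * w₂ (-a)) * w₃ k + (∑' a, J a * w₁ a * w₃ (-a)) * w₂ k :=
        sobolevNorm_mono (trilinearConv_le_of_resonant hN w₁ w₂ w₃)
    _ ≤ (∑' a, J a * w₁ a * w₂ (-a)) * sobolevNorm s w₃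
          + (∑' a, J a * w₁ a * w₃ (-a)) * sobolevNorm s w₂ := by
        grw [sobolevNorm_add_le, sobolevNorm_const_mul, sobolevNorm_const_mul]
    _ ≤ sobolevNorm s w₁ * sobolevNorm s w₂ * sobolevNorm s w₃
          + sobolevNorm s w₁ * sobolevNorm s w₃ * sobolevNorm s w₂ := by
        grw [tsum_J_mul_mul_comp_neg_le hs, tsum_J_mul_mul_comp_neg_le hs]
    _ = ENNReal.ofReal 2 * (sobolevNorm s w₁ * sobolevNorm s w₂ * sobolevNorm s w₃) := by
        rw [ENNReal.ofReal_ofNat]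
        ring
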